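/- For every integer j ≥ 1, a(2j+1,1) = a(2j,1); consequently ν_3(a(2j+1,1)) = ν_3(a(2j,1)) ≥ 2j+1. -/

import Mathlib

/-- The matrix `m(i,j)` of Hirschhorn: `m(i,j) = 0` whenever `i = 0` or `j = 0`
(corresponding to nonpositive indices), `m(1,1) = 9`, `m(2,1) = 6`, `m(3,1) = 1`,
`m(i,1) = 0` for `i ≥ 4`, and for `j ≥ 2`,
`m(i,j) = 27·m(i-1,j-1) + 9·m(i-2,j-1) + m(i-3,j-1)`
(truncated subtraction correctly yields the prescribed value `0` at nonpositive
first arguments). -/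
def mCoef : ℕ → ℕ → ℤ
  | _, 0 => 0
  | 0, _ => 0
  | 1, 1 => 9
  | 2, 1 => 6
  | 3, 1 => 1
  | _ + 4, 1 => 0
  | i, j + 2 => 27 * mCoef (i - 1) (j + 1) + 9 * mCoef (i - 2) (j + 1) + mCoef (i - 3) (j + 1)

/-- The matrix `a(j,k)`: `a(1,1) = 6`, `a(1,2) = 243`, `a(1,k) = 0` for `k ≥ 3`, and
`a(j+1,k) = ∑_{i≥1} a(j,i)·m(4i,i+k)` if `j` is odd, while
`a(j+1,k) = ∑_{i≥1} a(j,i)·m(4i+2,i+k)` if `j` is even.  All terms of these sums with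
`i > 3k + 3` vanish (since `m(i',j') = 0` unless `⌊(i'+2)/3⌋ ≤ j'`), so the sums may be
truncated at `i = 3k + 3`. -/
def aCoef : ℕ → ℕ → ℤ
  | 1, 1 => 6
  | 1, 2 => 243
  | j + 2, k =>
      if (j + 1) % 2 = 1 then
        ∑ i ∈ Finset.Icc 1 (3 * k + 3), aCoef (j + 1) i * mCoef (4 * i) (i + k)
      else
        ∑ i ∈ Finset.Icc 1 (3 * k + 3), aCoef (j + 1) i * mCoef (4 * i + 2) (i + k)
  | _, _ => 0

/-! Since `m(i,j) = 0` for `i > 3j`, only the term `i = 1` survives in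
`a(2j+1,1) = ∑ᵢ a(2j,i)·m(4i+2,i+1)`, and `m(6,2) = 1`.
For the divisibility, the recurrence for `m` gives `ν₃ m(i,j) ≥ (9j - 3i - 2)/2`, and
feeding this into the recurrences for `a`, row by row, gives
`ν₃ a(j,k+1) ≥ j + 3k` for odd `j` and `≥ j + 3k + 1` for even `j`. -/

open Finset

theorem pow_dvd_mul_of_pow_dvd_of_pow_dvd {M : Type*} [CommMonoid M] {p x y : M} {a n : ℕ}
    (hx : p ^ a ∣ x) (hy : p ^ (n - a) ∣ y) : p ^ n ∣ x * y :=
  (pow_dvd_pow p le_add_tsub).trans (pow_add p a (n - a) ▸ mul_dvd_mul hx hy)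

theorem mCoef_zero_left (j : ℕ) : mCoef 0 j = 0 := by
  rcases j with _ | _ | _ <;> rfl

theorem mCoef_add_two (i j : ℕ) :
    mCoef i (j + 2) =
      27 * mCoef (i - 1) (j + 1) + 9 * mCoef (i - 2) (j + 1) + mCoef (i - 3) (j + 1) := by
  rcases i with _ | i
  · simp [mCoef_zero_left]
  · simp [mCoef]

theorem mCoef_eq_zero_of_lt {i j : ℕ} (h : 3 * j < i) : mCoef i j = 0 := by
  induction j generalizing i with
  | zero => rcases i with _ | _ <;> rfl
  | succ j ih =>
    rcases j with _ | j
    · obtain ⟨n, rfl⟩ : ∃ n, i = n + 4 := ⟨i - 4, by omega⟩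
      rfl
    · rw [mCoef_add_two, ih (by omega), ih (by omega), ih (by omega)]
      ring

theorem mCoef_six_two : mCoef 6 2 = 1 := by
  simp [mCoef]

theorem pow_dvd_mCoef {i j e : ℕ} (h : 2 * e + 3 * i + 2 ≤ 9 * j) :
    (3 : ℤ) ^ e ∣ mCoef i j := by
  induction j generalizing i e with
  | zero => omega
  | succ j ih =>
    -- the recurrence truncates indices and exponents at `0`, where divisibility is trivial
    have ih' : ∀ i' e', i' = 0 ∨ e' = 0 ∨ 2 * e' + 3 * i' + 2 ≤ 9 * j →
        (3 : ℤ) ^ e' ∣ mCoef i' j := by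
      rintro i' e' (rfl | rfl | h')
      · simp [mCoef_zero_left]
      · simp
      · exact ih h'
    rcases j with _ | j
    · rcases i with _ | _ | _ | i
      · simp [mCoef_zero_left]
      · exact (pow_dvd_pow 3 (by omega : e ≤ 2)).trans (by norm_num [mCoef])
      · simp [show e = 0 by omega]
      · omega
    · rw [mCoef_add_two]
      refine dvd_add (dvd_add ?_ ?_) (ih' _ _ (by omega))
      · exact pow_dvd_mul_of_pow_dvd_of_pow_dvd (a := 3) (by norm_num) (ih' _ _ (by omega))
      · exact pow_dvd_mul_of_pow_dvd_of_pow_dvd (a := 2) (by norm_num) (ih' _ _ (by omega))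

theorem aCoef_even (t k : ℕ) :
    aCoef (2 * t + 2) k =
      ∑ i ∈ Icc 1 (3 * k + 3), aCoef (2 * t + 1) i * mCoef (4 * i) (i + k) := by
  simp [aCoef, Nat.add_mod]

theorem aCoef_odd (t k : ℕ) :
    aCoef (2 * t + 3) k =
      ∑ i ∈ Icc 1 (3 * k + 3), aCoef (2 * t + 2) i * mCoef (4 * i + 2) (i + k) := by
  simp [aCoef, Nat.add_mod]

theorem aCoef_odd_one (t : ℕ) : aCoef (2 * t + 3) 1 = aCoef (2 * t + 2) 1 := by
  rw [aCoef_odd, sum_eq_single_of_mem 1 (by simp), mCoef_six_two, mul_one]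
  intro i hi hi1
  rw [mCoef_eq_zero_of_lt (by rw [mem_Icc] at hi; omega), mul_zero]

theorem pow_dvd_aCoef_even_of_odd {t : ℕ}
    (hodd : ∀ i, (3 : ℤ) ^ (2 * t + 1 + 3 * i) ∣ aCoef (2 * t + 1) (i + 1)) (k : ℕ) :
    (3 : ℤ) ^ (2 * t + 3 + 3 * k) ∣ aCoef (2 * t + 2) (k + 1) := by
  rw [aCoef_even]
  refine dvd_sum fun i hi ↦ ?_
  obtain ⟨i, rfl⟩ : ∃ i', i = i' + 1 := ⟨i - 1, by rw [mem_Icc] at hi; omega⟩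
  refine pow_dvd_mul_of_pow_dvd_of_pow_dvd (hodd i) ?_
  obtain he | he := Nat.eq_zero_or_pos (2 * t + 3 + 3 * k - (2 * t + 1 + 3 * i))
  · simp [he]
  · exact pow_dvd_mCoef (by omega)

theorem pow_dvd_aCoef_odd_of_even {t : ℕ}
    (heven : ∀ i, (3 : ℤ) ^ (2 * t + 3 + 3 * i) ∣ aCoef (2 * t + 2) (i + 1)) (k : ℕ) :
    (3 : ℤ) ^ (2 * t + 3 + 3 * k) ∣ aCoef (2 * t + 3) (k + 1) := by
  rw [aCoef_odd]
  refine dvd_sum fun i hi ↦ ?_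
  obtain ⟨i, rfl⟩ : ∃ i', i = i' + 1 := ⟨i - 1, by rw [mem_Icc] at hi; omega⟩
  refine pow_dvd_mul_of_pow_dvd_of_pow_dvd (heven i) ?_
  obtain he | he := Nat.eq_zero_or_pos (2 * t + 3 + 3 * k - (2 * t + 3 + 3 * i))
  · simp [he]
  · exact pow_dvd_mCoef (by omega)

theorem pow_dvd_aCoef_odd (t k : ℕ) :
    (3 : ℤ) ^ (2 * t + 1 + 3 * k) ∣ aCoef (2 * t + 1) (k + 1) := by
  induction t generalizing k with
  | zero =>
    rcases k with _ | _ | k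
    · norm_num [aCoef]
    · norm_num [aCoef]
    · simp [aCoef]
  | succ t ih => exact pow_dvd_aCoef_odd_of_even (pow_dvd_aCoef_even_of_odd ih) k

/-- `a(2j+1,1) = a(2j,1)` for every `j ≥ 1`; consequently
`ν₃(a(2j+1,1)) = ν₃(a(2j,1)) ≥ 2j + 1`, i.e. `3 ^ (2j+1)` divides the common value. -/
theorem aCoef_first_column (j : ℕ) (hj : 1 ≤ j) :
    aCoef (2 * j + 1) 1 = aCoef (2 * j) 1 ∧ (3 : ℤ) ^ (2 * j + 1) ∣ aCoef (2 * j) 1 := by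
  obtain ⟨t, rfl⟩ : ∃ t, j = t + 1 := ⟨j - 1, by omega⟩
  exact ⟨aCoef_odd_one t, pow_dvd_aCoef_even_of_odd (pow_dvd_aCoef_odd t) 0⟩
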